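/- arXiv:2107.04418 — 4 statements merged into one kernel-verified Lean document; each statement's English description precedes it below -/
import Mathlib

section
/- For any pair of integers (m,n), there exists a constant C = C(m,n) > 0 such that for every bounded sequence θ : ℤ → ℝ one has ‖n^2[(S^m - I)θ]^2 - m^2[(S^n - I)θ]^2‖_{ℓ^∞} ≤ C ‖∂^{(2)}θ‖_{ℓ^∞} · ‖∂θ‖_{ℓ^∞}, where squares are taken pointwise. -/
/-! With `δ = θ (j+1) - θ j`, `a = θ (j+m) - θ j` and `b = θ (j+n) - θ j`, a discrete Taylor
bound gives `|a - m δ| ≤ m² ‖∂²θ‖`, so `n a - m b = n (a - m δ) - m (b - n δ)` is of size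
`‖∂²θ‖`, while `n a + m b` is of size `‖∂θ‖`. The claim follows from
`n² a² - m² b² = (n a + m b) (n a - m b)`. -/

theorem norm_sub_le_abs_mul_of_norm_succ_sub_le {E : Type*} [SeminormedAddCommGroup E]
    (f : ℤ → E) {D : ℝ} (hf : ∀ i, ‖f (i + 1) - f i‖ ≤ D) (j k : ℤ) :
    ‖f (j + k) - f j‖ ≤ |(k : ℝ)| * D := by
  induction k using Int.induction_on with
  | zero => simp
  | succ i ih =>
    calc ‖f (j + (i + 1)) - f j‖ ≤ ‖f (j + i + 1) - f (j + i)‖ + ‖f (j + i) - f j‖ := by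
          rw [← add_assoc]; exact norm_sub_le_norm_sub_add_norm_sub _ _ _
      _ ≤ D + |(i : ℝ)| * D := add_le_add (hf _) ih
      _ = |((i + 1 : ℤ) : ℝ)| * D := by
          rw [abs_of_nonneg (by positivity), abs_of_nonneg (by positivity)]; push_cast; ring
  | pred i ih =>
    calc ‖f (j + (-i - 1)) - f j‖
        ≤ ‖f (j + -i - 1 + 1) - f (j + -i - 1)‖ + ‖f (j + -i) - f j‖ := by
          rw [sub_add_cancel, ← add_sub_assoc, norm_sub_rev (f (j + -i)), add_comm]
          exact norm_sub_le_norm_sub_add_norm_sub _ _ _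
      _ ≤ D + |((-i : ℤ) : ℝ)| * D := add_le_add (hf _) ih
      _ = |((-i - 1 : ℤ) : ℝ)| * D := by
          push_cast
          rw [abs_neg, abs_of_nonneg (by positivity), ← neg_add', abs_neg,
            abs_of_nonneg (by positivity)]
          ring

theorem norm_le_sq_mul_of_norm_succ_sub_le {E : Type*} [SeminormedAddCommGroup E]
    (e : ℤ → E) {D : ℝ} (h0 : e 0 = 0) (he : ∀ i, ‖e (i + 1) - e i‖ ≤ |(i : ℝ)| * D)
    (k : ℤ) : ‖e k‖ ≤ k ^ 2 * D := by
  have hD : 0 ≤ D := by simpa using (norm_nonneg _).trans (he 1)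
  induction k using Int.induction_on with
  | zero => simp [h0]
  | succ i ih =>
    have hi : (0 : ℝ) ≤ i := by positivity
    calc ‖e (i + 1)‖ ≤ ‖e (i + 1) - e i‖ + ‖e i‖ := norm_le_norm_sub_add _ _
      _ ≤ |((i : ℤ) : ℝ)| * D + ((i : ℤ) : ℝ) ^ 2 * D := add_le_add (he i) ih
      _ ≤ ((i + 1 : ℤ) : ℝ) ^ 2 * D := by
          push_cast; rw [abs_of_nonneg hi]; nlinarith
  | pred i ih =>
    have hi : (0 : ℝ) ≤ i := by positivity
    calc ‖e (-i - 1)‖ ≤ ‖e (-i - 1 + 1) - e (-i - 1)‖ + ‖e (-i)‖ := by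
          rw [sub_add_cancel, norm_sub_rev]; exact norm_le_norm_sub_add _ _
      _ ≤ |((-i - 1 : ℤ) : ℝ)| * D + ((-i : ℤ) : ℝ) ^ 2 * D := add_le_add (he _) ih
      _ ≤ ((-i - 1 : ℤ) : ℝ) ^ 2 * D := by
          push_cast
          rw [← neg_add', abs_neg, abs_of_nonneg (by positivity)]; nlinarith

theorem abs_sub_sub_mul_le_sq_mul (θ : ℤ → ℝ) {D : ℝ}
    (h2 : ∀ j, |θ (j + 2) - 2 * θ (j + 1) + θ j| ≤ D) (j k : ℤ) :
    |θ (j + k) - θ j - k * (θ (j + 1) - θ j)| ≤ k ^ 2 * D := by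
  have hδ : ∀ i, ‖(θ (i + 1 + 1) - θ (i + 1)) - (θ (i + 1) - θ i)‖ ≤ D := fun i => by
    rw [Real.norm_eq_abs, add_assoc, one_add_one_eq_two]
    exact (h2 i).trans_eq' (by ring_nf)
  refine norm_le_sq_mul_of_norm_succ_sub_le
    (fun i : ℤ => θ (j + i) - θ j - i * (θ (j + 1) - θ j)) (by simp) (fun i => ?_) k
  -- the remainder's increment at `i` is `∂θ (j + i) - ∂θ j`
  have := norm_sub_le_abs_mul_of_norm_succ_sub_le (fun i => θ (i + 1) - θ i) hδ j i
  push_cast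
  convert this using 2
  ring_nf

/-- For any integers `m, n` there is `C = C(m,n) > 0` such that for every
bounded sequence `θ : ℤ → ℝ`:
`‖n² [(S^m - I)θ]² - m² [(S^n - I)θ]²‖_∞ ≤ C ‖∂^{(2)}θ‖_∞ ‖∂θ‖_∞`,
squares taken pointwise.  Sup-norms are encoded via uniform bounds `D1, D2`. -/
theorem stmt3 (m n : ℤ) :
    ∃ C : ℝ, 0 < C ∧ ∀ θ : ℤ → ℝ, ∀ D1 D2 : ℝ,
      (∀ j : ℤ, |θ (j + 1) - θ j| ≤ D1) →
      (∀ j : ℤ, |θ (j + 2) - 2 * θ (j + 1) + θ j| ≤ D2) →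
      ∀ j : ℤ,
        |(n : ℝ) ^ 2 * (θ (j + m) - θ j) ^ 2 - (m : ℝ) ^ 2 * (θ (j + n) - θ j) ^ 2|
          ≤ C * D2 * D1 := by
  refine ⟨2 * |(m : ℝ) * n| * (|(n : ℝ)| * m ^ 2 + |(m : ℝ)| * n ^ 2) + 1, by positivity, ?_⟩
  intro θ D1 D2 h1 h2 j
  have hD1 : 0 ≤ D1 := (abs_nonneg _).trans (h1 0)
  have hD2 : 0 ≤ D2 := (abs_nonneg _).trans (h2 0)
  have lip (k : ℤ) : |θ (j + k) - θ j| ≤ |(k : ℝ)| * D1 :=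
    norm_sub_le_abs_mul_of_norm_succ_sub_le θ h1 j k
  set δ := θ (j + 1) - θ j
  set a := θ (j + m) - θ j
  set b := θ (j + n) - θ j
  have hsum : |(n : ℝ) * a + m * b| ≤ 2 * |(m : ℝ) * n| * D1 := by
    calc |(n : ℝ) * a + m * b| ≤ |(n : ℝ)| * (|(m : ℝ)| * D1) + |(m : ℝ)| * (|(n : ℝ)| * D1) := by
          refine (abs_add_le _ _).trans ?_
          rw [abs_mul, abs_mul]
          gcongr <;> exact lip _
      _ = 2 * |(m : ℝ) * n| * D1 := by rw [abs_mul]; ring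
  have hdiff : |(n : ℝ) * a - m * b| ≤ (|(n : ℝ)| * m ^ 2 + |(m : ℝ)| * n ^ 2) * D2 := by
    calc |(n : ℝ) * a - m * b| = |n * (a - m * δ) - m * (b - n * δ)| := by ring_nf
      _ ≤ |(n : ℝ)| * (m ^ 2 * D2) + |(m : ℝ)| * (n ^ 2 * D2) := by
          refine (abs_sub _ _).trans ?_
          rw [abs_mul, abs_mul]
          gcongr <;> exact abs_sub_sub_mul_le_sq_mul θ h2 j _
      _ = _ := by ring
  calc |(n : ℝ) ^ 2 * a ^ 2 - (m : ℝ) ^ 2 * b ^ 2| = |n * a + m * b| * |n * a - m * b| := by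
        rw [← abs_mul]; ring_nf
    _ ≤ 2 * |(m : ℝ) * n| * D1 * ((|(n : ℝ)| * m ^ 2 + |(m : ℝ)| * n ^ 2) * D2) :=
        mul_le_mul hsum hdiff (abs_nonneg _) (by positivity)
    _ ≤ _ := by nlinarith [mul_nonneg hD1 hD2]
end

section
/- Fix d ≠ 0 and coefficients (a_k)_{k=-N}^{N}. If θ : [0,∞) → ℓ^∞(ℤ) is a C¹ solution of the nonlinear lattice equation θ̇_l = (1/d) Σ_{k=-N}^{N} a_k (e^{d(θ_{l+k} - θ_l)} - 1) + c, then the function h(t) ∈ ℓ^∞(ℤ) defined pointwise by h_l(t) = e^{d(θ_l(t) - c t)} is a C¹ solution of the linear lattice equation ḣ_l = Σ_{k=-N}^{N} a_k (h_{l+k} - h_l). Conversely, if h is a C¹ solution of the linear equation with h_l(t) > 0 for all l and t, then θ_l(t) = (log h_l(t))/d + c t solves the nonlinear equation. -/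
/-!
Writing `h = exp (d (θ - c t))`, the chain rule gives `ḣ_l = d (θ̇_l - c) h_l`, and
`e^{d(θ_{l+k} - θ_l)} h_l = h_{l+k}`, so the nonlinear lattice equation for `θ` becomes the linear
one for `h`. Conversely `θ = log h / d + c t` inverts this for positive `h`. Only the values of the
neighbours at the same time enter, so the lattice structure plays no role.
-/

open Real Finset

variable {κ : Type*}

lemma sum_mul_exp_sub_sub_one_mul_exp (s : Finset κ) (a y : κ → ℝ) (x u d : ℝ) :
    (∑ k ∈ s, a k * (exp (d * (y k - x)) - 1)) * exp (d * (x - u)) =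
      ∑ k ∈ s, a k * (exp (d * (y k - u)) - exp (d * (x - u))) := by
  rw [sum_mul]
  refine sum_congr rfl fun k _ => ?_
  have hexp : exp (d * (y k - x)) * exp (d * (x - u)) = exp (d * (y k - u)) := by
    rw [← exp_add]; ring_nf
  rw [← hexp]; ring

lemma exp_mul_log_div_add_sub {x y d : ℝ} (hx : 0 < x) (hy : 0 < y) (hd : d ≠ 0) (u : ℝ) :
    exp (d * ((log y / d + u) - (log x / d + u))) = y / x := by
  have hlin : d * ((log y / d + u) - (log x / d + u)) = log y - log x := by
    field_simp; ring
  rw [hlin, exp_sub, exp_log hx, exp_log hy]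

lemma hasDerivAt_exp_mul_sub_mul {f : ℝ → ℝ} {t c d : ℝ} (hd : d ≠ 0) (s : Finset κ)
    (a y : κ → ℝ)
    (hf : HasDerivAt f ((1 / d) * ∑ k ∈ s, a k * (exp (d * (y k - f t)) - 1) + c) t) :
    HasDerivAt (fun τ => exp (d * (f τ - c * τ)))
      (∑ k ∈ s, a k * (exp (d * (y k - c * t)) - exp (d * (f t - c * t)))) t := by
  have hchain := ((hf.fun_sub (hasDerivAt_const_mul c)).const_mul d).exp
  refine hchain.congr_deriv ?_
  rw [← sum_mul_exp_sub_sub_one_mul_exp]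
  field_simp
  ring

lemma hasDerivAt_log_div_add_mul {g : ℝ → ℝ} {t : ℝ} (c : ℝ) {d : ℝ} (hd : d ≠ 0)
    (s : Finset κ) (a y : κ → ℝ) (hg₀ : 0 < g t) (hy : ∀ k ∈ s, 0 < y k)
    (hg : HasDerivAt g (∑ k ∈ s, a k * (y k - g t)) t) :
    HasDerivAt (fun τ => log (g τ) / d + c * τ)
      ((1 / d) * ∑ k ∈ s, a k * (exp (d * ((log (y k) / d + c * t)
        - (log (g t) / d + c * t))) - 1) + c) t := by
  have hchain := ((hg.log hg₀.ne').div_const d).fun_add (hasDerivAt_const_mul c)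
  refine hchain.congr_deriv ?_
  have hsum : ∑ k ∈ s, a k * (exp (d * ((log (y k) / d + c * t) - (log (g t) / d + c * t))) - 1)
      = (∑ k ∈ s, a k * (y k - g t)) / g t := by
    rw [sum_div]
    refine sum_congr rfl fun k hk => ?_
    rw [exp_mul_log_div_add_sub hg₀ (hy k hk) hd, div_sub_one hg₀.ne', mul_div_assoc]
  rw [hsum]
  ring

/-- Discrete Cole–Hopf transformation: if `θ` solves
`θ̇_l = (1/d)∑_k a_k (e^{d(θ_{l+k}-θ_l)} - 1) + c` then
`h_l(t) = e^{d(θ_l(t) - ct)}` solves the linear equation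
`ḣ_l = ∑_k a_k (h_{l+k} - h_l)`; conversely any positive solution `h` of the
linear equation yields a solution `θ_l = (log h_l)/d + ct` of the nonlinear
equation. -/
theorem stmt10 (N : ℕ) (a : ℤ → ℝ) (c d : ℝ) (hd : d ≠ 0) :
    (∀ θ : ℝ → ℤ → ℝ,
      (∀ (l : ℤ) (t : ℝ), 0 ≤ t → HasDerivAt (fun s => θ s l)
        ((1 / d) * ∑ k ∈ Finset.Icc (-(N : ℤ)) (N : ℤ),
            a k * (Real.exp (d * (θ t (l + k) - θ t l)) - 1) + c) t) →
      ∀ (l : ℤ) (t : ℝ), 0 ≤ t →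
        HasDerivAt (fun s => Real.exp (d * (θ s l - c * s)))
          (∑ k ∈ Finset.Icc (-(N : ℤ)) (N : ℤ),
            a k * (Real.exp (d * (θ t (l + k) - c * t)) -
                   Real.exp (d * (θ t l - c * t)))) t)
    ∧
    (∀ h : ℝ → ℤ → ℝ,
      (∀ (l : ℤ) (t : ℝ), 0 < h t l) →
      (∀ (l : ℤ) (t : ℝ), 0 ≤ t → HasDerivAt (fun s => h s l)
        (∑ k ∈ Finset.Icc (-(N : ℤ)) (N : ℤ), a k * (h t (l + k) - h t l)) t) →
      ∀ (l : ℤ) (t : ℝ), 0 ≤ t →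
        HasDerivAt (fun s => Real.log (h s l) / d + c * s)
          ((1 / d) * ∑ k ∈ Finset.Icc (-(N : ℤ)) (N : ℤ),
              a k * (Real.exp (d * ((Real.log (h t (l + k)) / d + c * t)
                - (Real.log (h t l) / d + c * t))) - 1) + c) t) :=
  ⟨fun θ hθ l t ht => hasDerivAt_exp_mul_sub_mul hd _ a (fun k => θ t (l + k)) (hθ l t ht),
    fun h hpos hh l t ht =>
      hasDerivAt_log_div_add_mul c hd _ a (fun k => h t (l + k)) (hpos l t)
        (fun k _ => hpos (l + k) t) (hh l t ht)⟩
end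

section
/- Suppose the nonlinearity Θ_ch on ℓ^∞(ℤ) is given by [Θ_ch(θ)]_l = (1/d) Σ_{k=-N}^{N} a_k (e^{d(θ_{l+k} - θ_l)} - 1) + c for d ≠ 0. Then there exists a constant C > 0 such that for all θ ∈ ℓ^∞(ℤ) with ‖∂θ‖_∞ ≤ 1, the third-order Taylor estimate ‖Θ_ch(θ) - H_lin[θ] - d Q_ch(θ) - c‖_∞ ≤ C e^{2N|d| ‖∂θ‖_∞} ‖∂θ‖_∞³ holds, where [H_lin[θ]]_l = Σ_k a_k (θ_{l+k} - θ_l) and [Q_ch(θ)]_l = (1/2) Σ_k a_k (θ_{l+k} - θ_l)². -/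
/-!
After the constant `c` cancels, the expression is `1/d` times a weighted sum of third-order Taylor
remainders `e^x - 1 - x - x²/2` at `x = d (θ_{l+k} - θ_l)`, each bounded by `|x|³ e^{|x|}`.
Telescoping gives `|θ_{l+k} - θ_l| ≤ N D` for `|k| ≤ N`, so `|x| ≤ |d| N D`.
-/

open Finset

theorem Real.abs_exp_sub_one_sub_id_sub_sq_div_two_le (x : ℝ) :
    |Real.exp x - 1 - x - x ^ 2 / 2| ≤ |x| ^ 3 * Real.exp |x| := by
  have h := Complex.norm_exp_sub_sum_le_norm_mul_exp (x : ℂ) 3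
  have hcast : Complex.exp x - ∑ m ∈ range 3, (x : ℂ) ^ m / m.factorial
      = ((Real.exp x - 1 - x - x ^ 2 / 2 : ℝ) : ℂ) := by
    simp [sum_range_succ, Nat.factorial, sub_sub, add_assoc]
  rwa [hcast, Complex.norm_real, Real.norm_eq_abs, Complex.norm_real, Real.norm_eq_abs] at h

theorem abs_sub_le_natAbs_mul_of_abs_sub_succ_le {θ : ℤ → ℝ} {D : ℝ}
    (h : ∀ l, |θ (l + 1) - θ l| ≤ D) (l k : ℤ) : |θ (l + k) - θ l| ≤ k.natAbs * D := by
  have forward : ∀ (l : ℤ) (n : ℕ), |θ (l + n) - θ l| ≤ n * D := by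
    intro l n
    induction n with
    | zero => simp
    | succ n ih =>
      calc |θ (l + (n + 1 : ℕ)) - θ l|
          = |(θ (l + n + 1) - θ (l + n)) + (θ (l + n) - θ l)| := by push_cast; ring_nf
        _ ≤ D + n * D := (abs_add_le _ _).trans (add_le_add (h _) ih)
        _ = (n + 1 : ℕ) * D := by push_cast; ring
  rcases Int.eq_nat_or_neg k with ⟨n, rfl | rfl⟩
  · simpa using forward l n
  · simpa [abs_sub_comm, ← sub_eq_add_neg] using forward (l - n) n

theorem abs_sum_exp_sub_taylor_le {ι : Type*} (s : Finset ι) (a y : ι → ℝ) {d R : ℝ}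
    (hd : d ≠ 0) (hy : ∀ k ∈ s, |y k| ≤ R) :
    |(1 / d) * ∑ k ∈ s, a k * (Real.exp (d * y k) - 1) - ∑ k ∈ s, a k * y k
        - d * ((1 / 2) * ∑ k ∈ s, a k * y k ^ 2)|
      ≤ (∑ k ∈ s, |a k|) * d ^ 2 * R ^ 3 * Real.exp (|d| * R) := by
  have hremainder : (1 / d) * ∑ k ∈ s, a k * (Real.exp (d * y k) - 1) - ∑ k ∈ s, a k * y k
      - d * ((1 / 2) * ∑ k ∈ s, a k * y k ^ 2)
      = (1 / d) * ∑ k ∈ s, a k * (Real.exp (d * y k) - 1 - d * y k - (d * y k) ^ 2 / 2) := by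
    simp only [mul_sum, ← sum_sub_distrib]
    refine sum_congr rfl fun k _ => ?_
    field_simp
  have hterm : ∀ k ∈ s, |a k * (Real.exp (d * y k) - 1 - d * y k - (d * y k) ^ 2 / 2)|
      ≤ |a k| * ((|d| * R) ^ 3 * Real.exp (|d| * R)) := by
    intro k hk
    have hR : 0 ≤ R := (abs_nonneg _).trans (hy k hk)
    have hdy : |d * y k| ≤ |d| * R := by rw [abs_mul]; gcongr; exact hy k hk
    rw [abs_mul]
    gcongr
    exact (Real.abs_exp_sub_one_sub_id_sub_sq_div_two_le _).trans (by gcongr)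
  rw [hremainder, abs_mul, abs_div, abs_one]
  calc 1 / |d| * |∑ k ∈ s, a k * (Real.exp (d * y k) - 1 - d * y k - (d * y k) ^ 2 / 2)|
      ≤ 1 / |d| * ∑ k ∈ s, |a k| * ((|d| * R) ^ 3 * Real.exp (|d| * R)) := by
        gcongr
        exact (abs_sum_le_sum_abs _ _).trans (sum_le_sum hterm)
    _ = (∑ k ∈ s, |a k|) * d ^ 2 * R ^ 3 * Real.exp (|d| * R) := by
        rw [← sum_mul]
        field_simp
        rw [sq_abs]
        ring

/-- Third-order Taylor estimate for the Cole–Hopf nonlinearity: with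
`[Θ_ch(θ)]_l = (1/d)∑_k a_k(e^{d(θ_{l+k}-θ_l)}-1) + c`,
`[H_lin θ]_l = ∑_k a_k(θ_{l+k}-θ_l)` and
`[Q_ch θ]_l = (1/2)∑_k a_k(θ_{l+k}-θ_l)²`, there is `C > 0` so that whenever
`‖∂θ‖_∞ ≤ D ≤ 1`,
`‖Θ_ch(θ) - H_lin[θ] - d·Q_ch(θ) - c‖_∞ ≤ C e^{2N|d|D} D³`. -/
theorem stmt18 (N : ℕ) (a : ℤ → ℝ) (c d : ℝ) (hd : d ≠ 0) :
    ∃ C : ℝ, 0 < C ∧ ∀ θ : ℤ → ℝ, ∀ D : ℝ,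
      (∀ l : ℤ, |θ (l + 1) - θ l| ≤ D) → D ≤ 1 →
      ∀ l : ℤ,
        |((1 / d) * (∑ k ∈ Finset.Icc (-(N : ℤ)) (N : ℤ),
              a k * (Real.exp (d * (θ (l + k) - θ l)) - 1)) + c)
          - (∑ k ∈ Finset.Icc (-(N : ℤ)) (N : ℤ), a k * (θ (l + k) - θ l))
          - d * ((1 / 2) * ∑ k ∈ Finset.Icc (-(N : ℤ)) (N : ℤ),
              a k * (θ (l + k) - θ l) ^ 2)
          - c|
        ≤ C * Real.exp (2 * (N : ℝ) * |d| * D) * D ^ 3 := by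
  set S := ∑ k ∈ Icc (-(N : ℤ)) N, |a k|
  have hS : 0 ≤ S := sum_nonneg fun k _ => abs_nonneg (a k)
  refine ⟨S * d ^ 2 * N ^ 3 + 1, by positivity, fun θ D hθ _ l => ?_⟩
  have hD : 0 ≤ D := (abs_nonneg _).trans (hθ 0)
  have hincr : ∀ k ∈ Icc (-(N : ℤ)) N, |θ (l + k) - θ l| ≤ N * D := fun k hk =>
    (abs_sub_le_natAbs_mul_of_abs_sub_succ_le hθ l k).trans <| by
      have : k.natAbs ≤ N := by rw [mem_Icc] at hk; omega
      gcongr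
  rw [add_sub_right_comm, add_sub_right_comm, add_sub_cancel_right]
  calc _ ≤ S * d ^ 2 * (N * D) ^ 3 * Real.exp (|d| * (N * D)) :=
        abs_sum_exp_sub_taylor_le _ a (fun k => θ (l + k) - θ l) hd hincr
    _ = S * d ^ 2 * N ^ 3 * Real.exp (N * |d| * D) * D ^ 3 := by ring_nf
    _ ≤ _ := by
        gcongr ?_ * Real.exp (?_ * _ * _) * _ <;> linarith [(Nat.cast_nonneg N : (0 : ℝ) ≤ N)]
end

section
/- Let Φ : ℝ → ℝ be C¹ with strictly positive derivative, satisfying the traveling wave equation -cΦ'(ξ) = Σ_{ν=1}^4 Φ(ξ + τ_ν) - 4Φ(ξ) + g(Φ(ξ)) for all ξ ∈ ℝ, where c ≠ 0, τ_ν ∈ ℤ, and g ∈ C¹. Let ψ : ℝ → ℝ be bounded, positive, with ∫ ψ Φ' = 1, spanning the kernel of the formal adjoint, so that ∫ ψ(ξ)[L₀ v](ξ) dξ = 0 for all admissible v, where [L₀v](ξ) = cv'(ξ) + Σ_ν v(ξ+τ_ν) - 4v(ξ) + g'(Φ(ξ))v(ξ). Then applying L₀ to χ(ξ) = ξΦ'(ξ)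 yields [L₀χ](ξ) = cΦ'(ξ) + Σ_ν τ_ν Φ'(ξ+τ_ν), and consequently c = -Σ_{ν=1}^4 τ_ν ∫ ψ(ξ) Φ'(ξ+τ_ν) dξ. -/
open MeasureTheory

/-!
Differentiating the traveling wave equation gives `L₀ Φ' = 0`. Since `L₀` is a first order
operator with shifts, its commutator with multiplication by `ξ` is
`[L₀, ξ] v = c v + ∑_ν τ_ν v(· + τ_ν)`, so `L₀ (ξ Φ') = c Φ' + ∑_ν τ_ν Φ'(· + τ_ν)`.
Pairing this with `ψ`, which annihilates the range of `L₀`, and using `∫ ψ Φ' = 1` yields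
`0 = c + ∑_ν τ_ν ∫ ψ Φ'(· + τ_ν)`.
-/

namespace TravelingWave

variable {ι : Type*} [Fintype ι]

/-- `[L₀ v](ξ)`, with the derivative `v'` of `v` passed explicitly; the theorem has `κ = 4` and
`a = g' ∘ Φ`. -/
noncomputable def linOp (c : ℝ) (τ : ι → ℝ) (κ : ℝ) (a : ℝ → ℝ) (v v' : ℝ → ℝ) (ξ : ℝ) : ℝ :=
  c * v' ξ + (∑ ν, v (ξ + τ ν)) - κ * v ξ + a ξ * v ξ

theorem hasDerivAt_sum_comp_add {Φ Φ' : ℝ → ℝ} (hΦ : ∀ ξ, HasDerivAt Φ (Φ' ξ) ξ)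
    (τ : ι → ℝ) (ξ : ℝ) :
    HasDerivAt (fun x => ∑ ν, Φ (x + τ ν)) (∑ ν, Φ' (ξ + τ ν)) ξ :=
  HasDerivAt.fun_sum fun ν _ => (hΦ (ξ + τ ν)).comp_add_const ξ (τ ν)

theorem linOp_deriv_eq_zero {c κ : ℝ} {τ : ι → ℝ} {g g' Φ Φ' Φ'' : ℝ → ℝ}
    (hg : ∀ x, HasDerivAt g (g' x) x) (hΦ : ∀ ξ, HasDerivAt Φ (Φ' ξ) ξ)
    (hΦ' : ∀ ξ, HasDerivAt Φ' (Φ'' ξ) ξ)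
    (hwave : ∀ ξ, -c * Φ' ξ = (∑ ν, Φ (ξ + τ ν)) - κ * Φ ξ + g (Φ ξ)) (ξ : ℝ) :
    linOp c τ κ (g' ∘ Φ) Φ' Φ'' ξ = 0 := by
  have lhs : HasDerivAt (fun x => -c * Φ' x) (-c * Φ'' ξ) ξ := (hΦ' ξ).const_mul (-c)
  have rhs : HasDerivAt (fun x => (∑ ν, Φ (x + τ ν)) - κ * Φ x + g (Φ x))
      ((∑ ν, Φ' (ξ + τ ν)) - κ * Φ' ξ + g' (Φ ξ) * Φ' ξ) ξ :=
    ((hasDerivAt_sum_comp_add hΦ τ ξ).sub ((hΦ ξ).const_mul κ)).add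
      ((hg (Φ ξ)).comp ξ (hΦ ξ))
  rw [funext hwave] at lhs
  have := lhs.unique rhs
  simp only [linOp, Function.comp_apply]
  linarith

theorem linOp_id_mul (c κ : ℝ) (τ : ι → ℝ) (a v v' : ℝ → ℝ) (ξ : ℝ) :
    linOp c τ κ a (fun x => x * v x) (fun x => v x + x * v' x) ξ =
      c * v ξ + (∑ ν, τ ν * v (ξ + τ ν)) + ξ * linOp c τ κ a v v' ξ := by
  simp only [linOp, add_mul, Finset.sum_add_distrib, ← Finset.mul_sum]
  ring

theorem integral_mul_add_sum_shift (c : ℝ) (τ : ι → ℝ) {ψ v : ℝ → ℝ}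
    (hv : Integrable fun ξ => ψ ξ * v ξ)
    (hshift : ∀ ν, Integrable fun ξ => ψ ξ * v (ξ + τ ν)) :
    Integrable (fun ξ => ψ ξ * (c * v ξ + ∑ ν, τ ν * v (ξ + τ ν))) ∧
      ∫ ξ, ψ ξ * (c * v ξ + ∑ ν, τ ν * v (ξ + τ ν)) =
        c * (∫ ξ, ψ ξ * v ξ) + ∑ ν, τ ν * ∫ ξ, ψ ξ * v (ξ + τ ν) := by
  have expand : (fun ξ => ψ ξ * (c * v ξ + ∑ ν, τ ν * v (ξ + τ ν))) =
      fun ξ => c * (ψ ξ * v ξ) + ∑ ν, τ ν * (ψ ξ * v (ξ + τ ν)) := by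
    ext ξ
    simp only [mul_add, Finset.mul_sum, mul_left_comm (ψ ξ)]
  have hsum : Integrable fun ξ => ∑ ν, τ ν * (ψ ξ * v (ξ + τ ν)) :=
    integrable_finsetSum _ fun ν _ => (hshift ν).const_mul (τ ν)
  rw [expand]
  refine ⟨(hv.const_mul c).add hsum, ?_⟩
  rw [integral_add (hv.const_mul c) hsum, integral_const_mul,
    integral_finsetSum _ fun ν _ => (hshift ν).const_mul (τ ν)]
  simp only [integral_const_mul]

end TravelingWave

theorem stmt19_general (c : ℝ) (τ : Fin 4 → ℤ)
    (g g' : ℝ → ℝ) (hg : ∀ x, HasDerivAt g (g' x) x)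
    (Φ Φ' Φ'' : ℝ → ℝ)
    (hΦ : ∀ ξ, HasDerivAt Φ (Φ' ξ) ξ)
    (hΦ' : ∀ ξ, HasDerivAt Φ' (Φ'' ξ) ξ)
    (hwave : ∀ ξ : ℝ, -c * Φ' ξ =
      (∑ ν : Fin 4, Φ (ξ + (τ ν : ℝ))) - 4 * Φ ξ + g (Φ ξ))
    (ψ : ℝ → ℝ)
    (hnorm : (∫ ξ : ℝ, ψ ξ * Φ' ξ) = 1)
    (hker : ∀ v v' : ℝ → ℝ, (∀ ξ, HasDerivAt v (v' ξ) ξ) →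
      Integrable (fun ξ : ℝ => ψ ξ *
        (c * v' ξ + (∑ ν : Fin 4, v (ξ + (τ ν : ℝ))) - 4 * v ξ
          + g' (Φ ξ) * v ξ)) →
      (∫ ξ : ℝ, ψ ξ *
        (c * v' ξ + (∑ ν : Fin 4, v (ξ + (τ ν : ℝ))) - 4 * v ξ
          + g' (Φ ξ) * v ξ)) = 0)
    (hint : ∀ ν : Fin 4,
      Integrable (fun ξ : ℝ => ψ ξ * Φ' (ξ + (τ ν : ℝ)))) :
    (∀ ξ : ℝ,
      c * (Φ' ξ + ξ * Φ'' ξ) + (∑ ν : Fin 4, (ξ + (τ ν : ℝ)) * Φ' (ξ + (τ ν : ℝ)))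
          - 4 * (ξ * Φ' ξ) + g' (Φ ξ) * (ξ * Φ' ξ)
        = c * Φ' ξ + ∑ ν : Fin 4, (τ ν : ℝ) * Φ' (ξ + (τ ν : ℝ))) ∧
    c = -∑ ν : Fin 4, (τ ν : ℝ) * ∫ ξ : ℝ, ψ ξ * Φ' (ξ + (τ ν : ℝ)) := by
  have hLχ : ∀ ξ, TravelingWave.linOp c (fun ν => (τ ν : ℝ)) 4 (g' ∘ Φ)
      (fun x => x * Φ' x) (fun x => Φ' x + x * Φ'' x) ξ =
        c * Φ' ξ + ∑ ν, (τ ν : ℝ) * Φ' (ξ + τ ν) := fun ξ => by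
    rw [TravelingWave.linOp_id_mul, TravelingWave.linOp_deriv_eq_zero hg hΦ hΦ' hwave,
      mul_zero, add_zero]
  refine ⟨hLχ, ?_⟩
  have hψΦ' : Integrable fun ξ => ψ ξ * Φ' ξ :=
    Integrable.of_integral_ne_zero (by rw [hnorm]; exact one_ne_zero)
  obtain ⟨hLχ_int, hLχ_integral⟩ :=
    TravelingWave.integral_mul_add_sum_shift c _ hψΦ' hint
  have hχ : ∀ ξ, HasDerivAt (fun x => x * Φ' x) (Φ' ξ + ξ * Φ'' ξ) ξ := fun ξ => by
    simpa only [one_mul] using (hasDerivAt_id' ξ).fun_mul (hΦ' ξ)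
  have hzero : ∫ ξ, ψ ξ * TravelingWave.linOp c (fun ν => (τ ν : ℝ)) 4 (g' ∘ Φ)
      (fun x => x * Φ' x) (fun x => Φ' x + x * Φ'' x) ξ = 0 :=
    hker _ _ hχ (hLχ_int.congr (ae_of_all _ fun ξ => congrArg (ψ ξ * ·) (hLχ ξ).symm))
  simp only [hLχ, hLχ_integral, hnorm, mul_one] at hzero
  linarith

/-- Wave speed via the solvability condition: if `(c,Φ)` solves the traveling
wave MFDE `-cΦ'(ξ) = ∑_ν Φ(ξ+τ_ν) - 4Φ(ξ) + g(Φ(ξ))` with `c ≠ 0`, `Φ' > 0`,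
and `ψ > 0` is bounded with `∫ψΦ' = 1` and annihilates the range of the
linearization `L₀`, then for `χ(ξ) = ξΦ'(ξ)` one has
`[L₀χ](ξ) = cΦ'(ξ) + ∑_ν τ_ν Φ'(ξ+τ_ν)`, and consequently
`c = -∑_ν τ_ν ∫ ψ(ξ) Φ'(ξ+τ_ν) dξ`. -/
theorem stmt19 (c : ℝ) (hc : c ≠ 0) (τ : Fin 4 → ℤ)
    (g g' : ℝ → ℝ) (hg : ∀ x, HasDerivAt g (g' x) x)
    (Φ Φ' Φ'' : ℝ → ℝ)
    (hΦ : ∀ ξ, HasDerivAt Φ (Φ' ξ) ξ)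
    (hΦ' : ∀ ξ, HasDerivAt Φ' (Φ'' ξ) ξ)
    (hΦpos : ∀ ξ, 0 < Φ' ξ)
    (hwave : ∀ ξ : ℝ, -c * Φ' ξ =
      (∑ ν : Fin 4, Φ (ξ + (τ ν : ℝ))) - 4 * Φ ξ + g (Φ ξ))
    (ψ : ℝ → ℝ) (hψpos : ∀ ξ, 0 < ψ ξ) (hψbdd : ∃ C : ℝ, ∀ ξ, |ψ ξ| ≤ C)
    (hnorm : (∫ ξ : ℝ, ψ ξ * Φ' ξ) = 1)
    (hker : ∀ v v' : ℝ → ℝ, (∀ ξ, HasDerivAt v (v' ξ) ξ) →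
      Integrable (fun ξ : ℝ => ψ ξ *
        (c * v' ξ + (∑ ν : Fin 4, v (ξ + (τ ν : ℝ))) - 4 * v ξ
          + g' (Φ ξ) * v ξ)) →
      (∫ ξ : ℝ, ψ ξ *
        (c * v' ξ + (∑ ν : Fin 4, v (ξ + (τ ν : ℝ))) - 4 * v ξ
          + g' (Φ ξ) * v ξ)) = 0)
    (hint : ∀ ν : Fin 4,
      Integrable (fun ξ : ℝ => ψ ξ * Φ' (ξ + (τ ν : ℝ)))) :
    (∀ ξ : ℝ,
      c * (Φ' ξ + ξ * Φ'' ξ) + (∑ ν : Fin 4, (ξ + (τ ν : ℝ)) * Φ' (ξ + (τ ν : ℝ)))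
          - 4 * (ξ * Φ' ξ) + g' (Φ ξ) * (ξ * Φ' ξ)
        = c * Φ' ξ + ∑ ν : Fin 4, (τ ν : ℝ) * Φ' (ξ + (τ ν : ℝ))) ∧
    c = -∑ ν : Fin 4, (τ ν : ℝ) * ∫ ξ : ℝ, ψ ξ * Φ' (ξ + (τ ν : ℝ)) :=
  stmt19_general c τ g g' hg Φ Φ' Φ'' hΦ hΦ' hwave ψ hnorm hker hint
end
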